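/- arXiv:cs/0610072 — 3 statements merged into one kernel-verified Lean document; each statement's English description precedes it below -/
import Mathlib

section
/- If > is a well-founded ordering on a set E, then its multiset extension >_mul on finite multisets over E is well-founded. -/
/-- `MulLt r N M` : `N` is obtained from `M` by removing a nonempty multiset `X`
and adding a multiset `Y` every element of which is smaller than some element of `X`. -/
def MulLt {α : Type*} (r : α → α → Prop) (N M : Multiset α) : Prop :=
  ∃ X Y Z : Multiset α, X ≠ 0 ∧ M = Z + X ∧ N = Z + Y ∧ ∀ y ∈ Y, ∃ x ∈ X, r y x

open Relation Multiset

private lemma transGen_cutExpand {α : Type*} {r : α → α → Prop} :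
    ∀ (X Y : Multiset α), X ≠ 0 → (∀ y ∈ Y, ∃ x ∈ X, r y x) →
      Relation.TransGen (CutExpand r) Y X := by
  intro X
  induction X using Multiset.induction with
  | empty => intro Y h; exact absurd rfl h
  | cons a X' ih =>
    intro Y _ hY
    classical
    set Y₁ := Y.filter (fun y => r y a) with hY₁
    set Y₂ := Y.filter (fun y => ¬ r y a) with hY₂
    have hsplit : Y₁ + Y₂ = Y := Multiset.filter_add_not _ _
    have h1 : ∀ y ∈ Y₁, r y a := fun y hy => (Multiset.mem_filter.1 hy).2
    have hstep : CutExpand r Y₁ {a} := cutExpand_singleton h1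
    rcases eq_or_ne X' 0 with rfl | hX'
    · have : Y₂ = 0 := by
        rw [Multiset.eq_zero_iff_forall_notMem]
        intro y hy
        obtain ⟨hyY, hna⟩ := Multiset.mem_filter.1 hy
        obtain ⟨x, hx, hr⟩ := hY y hyY
        simp only [Multiset.cons_zero, Multiset.mem_singleton] at hx
        exact hna (hx ▸ hr)
      have hYeq : Y = Y₁ := by rw [← hsplit, this, add_zero]
      rw [hYeq]
      exact TransGen.single (by simpa using hstep)
    · have h2 : ∀ y ∈ Y₂, ∃ x ∈ X', r y x := by
        intro y hy
        obtain ⟨hyY, hna⟩ := Multiset.mem_filter.1 hy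
        obtain ⟨x, hx, hr⟩ := hY y hyY
        rcases Multiset.mem_cons.1 hx with rfl | hx'
        · exact absurd hr hna
        · exact ⟨x, hx', hr⟩
      have htg : TransGen (CutExpand r) Y₂ X' := ih Y₂ hX' h2
      have hlift : TransGen (CutExpand r) (Y₁ + Y₂) (Y₁ + X') :=
        TransGen.lift (fun s => Y₁ + s) (fun _ _ h => (cutExpand_add_left Y₁).2 h) _ _ htg
      have hlast : CutExpand r (Y₁ + X') (a ::ₘ X') := by
        have : CutExpand r (Y₁ + X') ({a} + X') := (cutExpand_add_right X').2 hstep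
        simpa using this
      rw [← hsplit]
      exact hlift.tail hlast

/-- The multiset extension of a well-founded ordering is well-founded. -/
theorem mulExt_wellFounded {α : Type*} (r : α → α → Prop) (hwf : WellFounded r) :
    WellFounded (MulLt r) := by
  have hwfc : WellFounded (Relation.TransGen (CutExpand r)) := hwf.cutExpand.transGen
  apply Subrelation.wf (r := Relation.TransGen (CutExpand r)) _ hwfc
  rintro N M ⟨X, Y, Z, hX, rfl, rfl, hY⟩
  exact TransGen.lift (fun s => Z + s) (fun _ _ h => (cutExpand_add_left Z).2 h)
    _ _ (transGen_cutExpand X Y hX hY)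
end

section
/- The combination of β-reduction and a rewrite system R with algebraic left-hand sides commutes in the following sense: if t head-β-reduces to u (i.e. t = ([x:U]v) w and u = v{x→w}) and t R-reduces in zero or more steps to t', then there exists a term s such that u R-reduces in zero or more steps to s and t' head-β-reduces to s. -/
/-- Terms of a lambda calculus with sorts, function symbols, abstraction,
dependent product and application (de Bruijn indices). -/
inductive Tm (F : Type) : Type
  | var : Nat → Tm F
  | sort : Bool → Tm F
  | symb : F → Tm F
  | lam : Tm F → Tm F → Tm F
  | pi : Tm F → Tm F → Tm F
  | app : Tm F → Tm F → Tm F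

namespace Tm

variable {F : Type}

def liftRen (f : Nat → Nat) : Nat → Nat
  | 0 => 0
  | n + 1 => f n + 1

def rename (f : Nat → Nat) : Tm F → Tm F
  | var n => var (f n)
  | sort s => sort s
  | symb c => symb c
  | lam T b => lam (rename f T) (rename (liftRen f) b)
  | pi T b => pi (rename f T) (rename (liftRen f) b)
  | app t u => app (rename f t) (rename f u)

def liftSub (σ : Nat → Tm F) : Nat → Tm F
  | 0 => var 0
  | n + 1 => rename Nat.succ (σ n)

/-- Simultaneous substitution. -/
def subst (σ : Nat → Tm F) : Tm F → Tm F
  | var n => σ n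
  | sort s => sort s
  | symb c => symb c
  | lam T b => lam (subst σ T) (subst (liftSub σ) b)
  | pi T b => pi (subst σ T) (subst (liftSub σ) b)
  | app t u => app (subst σ t) (subst σ u)

/-- Substitution of `a` for the variable `0` (β-reduction substitution). -/
def subst0 (a b : Tm F) : Tm F :=
  subst (fun n => match n with | 0 => a | m + 1 => var m) b

/-- Free variables of a term. -/
def fv : Tm F → Set Nat
  | var n => {n}
  | sort _ => ∅
  | symb _ => ∅
  | lam T b => fv T ∪ {n | n + 1 ∈ fv b}
  | pi T b => fv T ∪ {n | n + 1 ∈ fv b}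
  | app t u => fv t ∪ fv u

/-- `appList t [u₁,…,uₙ]` is the iterated application `t u₁ ⋯ uₙ`. -/
def appList (t : Tm F) : List (Tm F) → Tm F
  | [] => t
  | u :: us => appList (app t u) us

/-- Algebraic terms: built only from variables and applications `f t₁ ⋯ tₙ`
of function symbols. -/
inductive Alg : Tm F → Prop
  | var (n : Nat) : Alg (var n)
  | symbApp (f : F) (ts : List (Tm F)) : (∀ t ∈ ts, Alg t) → Alg (appList (symb f) ts)

/-- Closure of a base relation under all contexts. -/
inductive Close (b : Tm F → Tm F → Prop) : Tm F → Tm F → Prop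
  | base {t u} : b t u → Close b t u
  | lamT {T T' u} : Close b T T' → Close b (lam T u) (lam T' u)
  | lamB {T u u'} : Close b u u' → Close b (lam T u) (lam T u')
  | piT {T T' u} : Close b T T' → Close b (pi T u) (pi T' u)
  | piB {T u u'} : Close b u u' → Close b (pi T u) (pi T u')
  | appL {t t' u} : Close b t t' → Close b (app t u) (app t' u)
  | appR {t u u'} : Close b u u' → Close b (app t u) (app t u')

/-- One-step rewriting with the rules of `R`: the closure under substitution
and context of the rules. -/
def Rstep (R : Set (Tm F × Tm F)) : Tm F → Tm F → Prop :=
  Close (fun t u => ∃ l r σ, (l, r) ∈ R ∧ t = subst σ l ∧ u = subst σ r)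

/-- One-step β-reduction. -/
def Beta : Tm F → Tm F → Prop :=
  Close (fun t u => ∃ T bo a, t = app (lam T bo) a ∧ u = subst0 a bo)

/-- Every rule has an algebraic left-hand side which is not a variable, and
the free variables of the right-hand side occur in the left-hand side. -/
def GoodRules (R : Set (Tm F × Tm F)) : Prop :=
  ∀ p ∈ R, Alg p.1 ∧ (∀ n, p.1 ≠ var n) ∧ fv p.2 ⊆ fv p.1

end Tm

namespace Tm

variable {F : Type}

theorem liftRen_comp (f g : Nat → Nat) :
    liftRen (f ∘ g) = liftRen f ∘ liftRen g := by
  funext n; cases n <;> rfl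

theorem rename_comp (f g : Nat → Nat) (t : Tm F) :
    rename f (rename g t) = rename (f ∘ g) t := by
  induction t generalizing f g <;>
    simp [rename, liftRen_comp, *]

theorem rename_subst (f : Nat → Nat) (σ : Nat → Tm F) (t : Tm F) :
    rename f (subst σ t) = subst (fun n => rename f (σ n)) t := by
  induction t generalizing f σ <;> simp [rename, subst, *]
  all_goals {
    congr 1
    funext n; cases n with
    | zero => rfl
    | succ n =>
      simp [liftSub, rename_comp]
      congr 1 }

theorem subst_rename (σ : Nat → Tm F) (f : Nat → Nat) (t : Tm F) :
    subst σ (rename f t) = subst (fun n => σ (f n)) t := by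
  induction t generalizing f σ <;> simp [rename, subst, *]
  all_goals {
    congr 1
    funext n; cases n <;> rfl }

theorem subst_subst (σ τ : Nat → Tm F) (t : Tm F) :
    subst σ (subst τ t) = subst (fun n => subst σ (τ n)) t := by
  induction t generalizing σ τ <;> simp [subst, *]
  all_goals {
    congr 1
    funext n; cases n with
    | zero => rfl
    | succ n =>
      simp [liftSub, subst_rename, rename_subst] }

theorem subst_appList (σ : Nat → Tm F) (h : Tm F) (ts : List (Tm F)) :
    subst σ (appList h ts) = appList (subst σ h) (ts.map (subst σ)) := by
  induction ts generalizing h with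
  | nil => rfl
  | cons a as ih => simp [appList, ih, subst]

def headOf : Tm F → Tm F
  | app t _ => headOf t
  | var n => var n
  | sort s => sort s
  | symb c => symb c
  | lam T b => lam T b
  | pi T b => pi T b

theorem headOf_appList (h : Tm F) (ts : List (Tm F)) :
    headOf (appList h ts) = headOf h := by
  induction ts generalizing h with
  | nil => rfl
  | cons a as ih => simp [appList, ih, headOf]

theorem headOf_subst_alg {l : Tm F} (hA : Alg l) (hnv : ∀ n, l ≠ var n) :
    ∃ f, ∀ σ : Nat → Tm F, headOf (subst σ l) = symb f := by
  cases hA with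
  | var n => exact absurd rfl (hnv n)
  | symbApp f ts _ =>
    refine ⟨f, fun σ => ?_⟩
    rw [subst_appList, headOf_appList]
    rfl

theorem rstep_subst {R : Set (Tm F × Tm F)} {t u : Tm F}
    (h : Rstep R t u) : ∀ σ : Nat → Tm F, Rstep R (subst σ t) (subst σ u) := by
  induction h with
  | base hb =>
    intro σ
    obtain ⟨l, r, τ, hlr, ht, hu⟩ := hb
    subst ht; subst hu
    exact Close.base ⟨l, r, fun n => subst σ (τ n), hlr,
      (subst_subst ..), (subst_subst ..)⟩
  | lamT _ ih => exact fun σ => Close.lamT (ih σ)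
  | lamB _ ih => exact fun σ => Close.lamB (ih (liftSub σ))
  | piT _ ih => exact fun σ => Close.piT (ih σ)
  | piB _ ih => exact fun σ => Close.piB (ih (liftSub σ))
  | appL _ ih => exact fun σ => Close.appL (ih σ)
  | appR _ ih => exact fun σ => Close.appR (ih σ)

theorem rstep_rename {R : Set (Tm F × Tm F)} {t u : Tm F}
    (h : Rstep R t u) : ∀ f : Nat → Nat, Rstep R (rename f t) (rename f u) := by
  induction h with
  | base hb =>
    intro f
    obtain ⟨l, r, τ, hlr, ht, hu⟩ := hb
    subst ht; subst hu
    exact Close.base ⟨l, r, fun n => rename f (τ n), hlr,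
      (rename_subst ..), (rename_subst ..)⟩
  | lamT _ ih => exact fun f => Close.lamT (ih f)
  | lamB _ ih => exact fun f => Close.lamB (ih (liftRen f))
  | piT _ ih => exact fun f => Close.piT (ih f)
  | piB _ ih => exact fun f => Close.piB (ih (liftRen f))
  | appL _ ih => exact fun f => Close.appL (ih f)
  | appR _ ih => exact fun f => Close.appR (ih f)

theorem RTG_subst_mono {R : Set (Tm F × Tm F)} (σ τ : Nat → Tm F)
    (hστ : ∀ n, Relation.ReflTransGen (Rstep R) (σ n) (τ n)) (t : Tm F) :
    Relation.ReflTransGen (Rstep R) (subst σ t) (subst τ t) := by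
  induction t generalizing σ τ with
  | var n => exact hστ n
  | sort s => exact .refl
  | symb c => exact .refl
  | lam T b ihT ihb =>
    have h1 : Relation.ReflTransGen (Rstep R) (lam (subst σ T) (subst (liftSub σ) b))
        (lam (subst τ T) (subst (liftSub σ) b)) :=
      Relation.ReflTransGen.lift _ (fun _ _ h => Close.lamT h) _ _ (ihT σ τ hστ)
    have h2 : Relation.ReflTransGen (Rstep R) (lam (subst τ T) (subst (liftSub σ) b))
        (lam (subst τ T) (subst (liftSub τ) b)) := by
      refine Relation.ReflTransGen.lift _ (fun _ _ h => Close.lamB h) _ _ (ihb _ _ ?_)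
      intro n
      cases n with
      | zero => exact .refl
      | succ n =>
        exact Relation.ReflTransGen.lift _ (fun _ _ h => rstep_rename h Nat.succ) _ _ (hστ n)
    exact h1.trans h2
  | pi T b ihT ihb =>
    have h1 : Relation.ReflTransGen (Rstep R) (pi (subst σ T) (subst (liftSub σ) b))
        (pi (subst τ T) (subst (liftSub σ) b)) :=
      Relation.ReflTransGen.lift _ (fun _ _ h => Close.piT h) _ _ (ihT σ τ hστ)
    have h2 : Relation.ReflTransGen (Rstep R) (pi (subst τ T) (subst (liftSub σ) b))
        (pi (subst τ T) (subst (liftSub τ) b)) := by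
      refine Relation.ReflTransGen.lift _ (fun _ _ h => Close.piB h) _ _ (ihb _ _ ?_)
      intro n
      cases n with
      | zero => exact .refl
      | succ n =>
        exact Relation.ReflTransGen.lift _ (fun _ _ h => rstep_rename h Nat.succ) _ _ (hστ n)
    exact h1.trans h2
  | app a b iha ihb =>
    exact (Relation.ReflTransGen.lift _ (fun _ _ h => Close.appL h) _ _ (iha σ τ hστ)).trans
      (Relation.ReflTransGen.lift _ (fun _ _ h => Close.appR h) _ _ (ihb σ τ hστ))

theorem headBeta_step {R : Set (Tm F × Tm F)} (hR : GoodRules R)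
    {U v w t' : Tm F} (h : Rstep R (app (lam U v) w) t') :
    ∃ U' v' w', t' = app (lam U' v') w' ∧
      Relation.ReflTransGen (Rstep R) (subst0 w v) (subst0 w' v') := by
  cases h with
  | base hb =>
    obtain ⟨l, r, σ, hlr, ht, _⟩ := hb
    obtain ⟨hA, hnv, _⟩ := hR _ hlr
    obtain ⟨f, hf⟩ := headOf_subst_alg hA hnv
    have := hf σ
    rw [← ht] at this
    simp [headOf] at this
  | appL hl =>
    cases hl with
    | base hb =>
      obtain ⟨l, r, σ, hlr, ht, _⟩ := hb
      obtain ⟨hA, hnv, _⟩ := hR _ hlr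
      obtain ⟨f, hf⟩ := headOf_subst_alg hA hnv
      have := hf σ
      rw [← ht] at this
      simp [headOf] at this
    | lamT hT => exact ⟨_, v, w, rfl, .refl⟩
    | lamB hb =>
      exact ⟨U, _, w, rfl, .single (rstep_subst hb _)⟩
  | appR hr =>
    refine ⟨U, v, _, rfl, ?_⟩
    apply RTG_subst_mono
    intro n
    cases n with
    | zero => exact .single hr
    | succ n => exact .refl

end Tm

open Tm in
/-- Commutation of head-β-reduction with rewriting for rules with algebraic
left-hand sides: if `t = ([x:U]v) w` head-β-reduces to `u = v{x→w}` and
`t →_R* t'`, then there is `s` with `u →_R* s` and `t'` head-β-reduces to `s`. -/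
theorem headBeta_Rstep_commute {F : Type} (R : Set (Tm F × Tm F))
    (hR : GoodRules R) (U v w t' : Tm F)
    (h : Relation.ReflTransGen (Rstep R) (Tm.app (Tm.lam U v) w) t') :
    ∃ s, Relation.ReflTransGen (Rstep R) (subst0 w v) s ∧
      ∃ U' v' w', t' = Tm.app (Tm.lam U' v') w' ∧ s = subst0 w' v' := by
  induction h with
  | refl => exact ⟨subst0 w v, .refl, U, v, w, rfl, rfl⟩
  | tail hab hbc ih =>
    obtain ⟨s, hs, U', v', w', rfl, rfl⟩ := ih
    obtain ⟨U'', v'', w'', rfl, hstep⟩ := Tm.headBeta_step hR hbc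
    exact ⟨subst0 w'' v'', hs.trans hstep, U'', v'', w'', rfl, rfl⟩
end

section
/- Define ⊥₀ = ∅ and ⊥ᵢ₊₁ = ⊥ᵢ ∪ {t neutral | every one-step reduct of t is in ⊥ᵢ}, and ⊥ = ⋃ᵢ ⊥ᵢ. Then, assuming the reduction relation is finitely branching, ⊥ is a reducibility candidate and is the smallest one: ⊥ equals the intersection of all reducibility candidates. -/
/-- `t` is strongly normalizing for the reduction relation `red`. -/
def SNt {T : Type*} (red : T → T → Prop) (t : T) : Prop :=
  Acc (fun a b => red b a) t

/-- `R` is a reducibility candidate for the reduction relation `red` and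
set `N` of neutral terms. -/
def IsCand {T : Type*} (red : T → T → Prop) (N : Set T) (R : Set T) : Prop :=
  (∀ t ∈ R, SNt red t) ∧
  (∀ t ∈ R, ∀ t', red t t' → t' ∈ R) ∧
  (∀ t ∈ N, (∀ t', red t t' → t' ∈ R) → t ∈ R)

/-- With `⊥₀ = ∅`, `⊥ᵢ₊₁ = ⊥ᵢ ∪ {t neutral | all one-step reducts of t are in ⊥ᵢ}`
and the reduction relation finitely branching, `⊥ = ⋃ᵢ ⊥ᵢ` is a reducibility
candidate and is the smallest one: it equals the intersection of all candidates. -/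
theorem bot_smallest_candidate {T : Type*} (red : T → T → Prop) (N : Set T)
    (hfb : ∀ t, {u | red t u}.Finite)
    (B : ℕ → Set T) (hB0 : B 0 = ∅)
    (hBs : ∀ i, B (i + 1) = B i ∪ {t | t ∈ N ∧ ∀ u, red t u → u ∈ B i}) :
    IsCand red N (⋃ i, B i) ∧ (⋃ i, B i) = ⋂₀ {R | IsCand red N R} := by
  classical
  -- monotonicity
  have hmono : ∀ {i j : ℕ}, i ≤ j → B i ⊆ B j := by
    intro i j hij
    induction hij with
    | refl => exact subset_rfl
    | @step k h ih =>
      exact ih.trans (by rw [hBs k]; exact Set.subset_union_left)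
  -- closure under reduction, level-wise
  have hred : ∀ i, ∀ t ∈ B i, ∀ u, red t u → u ∈ B i := by
    intro i
    induction i with
    | zero => intro t ht; rw [hB0] at ht; exact ht.elim
    | succ i ih =>
      intro t ht u hu
      rw [hBs i] at ht
      rcases ht with ht | ht
      · exact hmono (Nat.le_succ i) (ih t ht u hu)
      · exact hmono (Nat.le_succ i) (ht.2 u hu)
  -- strong normalization, level-wise
  have hsn : ∀ i, ∀ t ∈ B i, SNt red t := by
    intro i
    induction i with
    | zero => intro t ht; rw [hB0] at ht; exact ht.elim
    | succ i ih =>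
      intro t ht
      rw [hBs i] at ht
      rcases ht with ht | ht
      · exact ih t ht
      · exact Acc.intro t fun u hu => ih u (ht.2 u hu)
  -- the union is a candidate
  have hcand : IsCand red N (⋃ i, B i) := by
    refine ⟨?_, ?_, ?_⟩
    · intro t ht
      obtain ⟨i, hi⟩ := Set.mem_iUnion.mp ht
      exact hsn i t hi
    · intro t ht u hu
      obtain ⟨i, hi⟩ := Set.mem_iUnion.mp ht
      exact Set.mem_iUnion.mpr ⟨i, hred i t hi u hu⟩
    · intro t htN h
      -- choose an index for each reduct, bound by finiteness
      have hex : ∀ u, ∃ i, red t u → u ∈ B i := by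
        intro u
        by_cases hu : red t u
        · obtain ⟨i, hi⟩ := Set.mem_iUnion.mp (h u hu)
          exact ⟨i, fun _ => hi⟩
        · exact ⟨0, fun hc => absurd hc hu⟩
      choose f hf using hex
      set s := (hfb t).toFinset with hs
      set n := s.sup f with hn
      have hall : ∀ u, red t u → u ∈ B n := by
        intro u hu
        have hus : u ∈ s := (Set.Finite.mem_toFinset _).mpr hu
        exact hmono (Finset.le_sup hus) (hf u hu)
      refine Set.mem_iUnion.mpr ⟨n + 1, ?_⟩
      rw [hBs n]
      exact Or.inr ⟨htN, hall⟩
  refine ⟨hcand, ?_⟩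
  apply le_antisymm
  · -- union ⊆ every candidate
    intro t ht R hR
    obtain ⟨i, hi⟩ := Set.mem_iUnion.mp ht
    clear ht
    induction i generalizing t with
    | zero => rw [hB0] at hi; exact hi.elim
    | succ i ih =>
      rw [hBs i] at hi
      rcases hi with hi | hi
      · exact ih hi
      · exact hR.2.2 t hi.1 fun u hu => ih (hi.2 u hu)
  · intro t ht
    exact ht _ hcand
end
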